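/- arXiv:0801.3957 — 3 statements merged into one kernel-verified Lean document; each statement's English description precedes it below -/
import Mathlib

section
/- Let T be a divisible abelian 2-group (a 2-torus) of finite Prüfer rank, and let i be an automorphism of T of order 2. Then either i inverts every element of T, or the fixed-point subgroup C_T(i) is infinite. -/
/-- A 2-torus `T` (divisible abelian 2-group of finite Prüfer rank) with an
automorphism `i` of order 2: either `i` inverts every element or its fixed
subgroup is infinite. -/
theorem stmt0 (T : Type*) [AddCommGroup T]
    (hdiv : ∀ (t : T) (n : ℕ), n ≠ 0 → ∃ s : T, n • s = t)
    (h2 : ∀ t : T, ∃ k : ℕ, (2 ^ k) • t = 0)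
    (hrank : {t : T | 2 • t = 0}.Finite)
    (i : AddAut T) (hi2 : 2 • i = 0) (hi1 : i ≠ 0) :
    (∀ t : T, i t = -t) ∨ {t : T | i t = t}.Infinite := by
  rw [or_iff_not_imp_right]
  intro hfin
  rw [Set.not_infinite] at hfin
  have hii : ∀ u : T, i (i u) = u := by
    intro u
    have : (2 • i) u = (0 : AddAut T) u := by rw [hi2]
    simpa [two_nsmul, AddAut.add_apply, AddAut.zero_apply] using this
  -- fixed point subgroup
  let G : AddSubgroup T :=
    { carrier := {t : T | i t = t}
      add_mem' := fun {a b} ha hb => by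
        simp only [Set.mem_setOf_eq] at *
        rw [map_add, ha, hb]
      zero_mem' := by simp
      neg_mem' := fun {a} ha => by
        simp only [Set.mem_setOf_eq] at *
        rw [map_neg, ha] }
  haveI : Fintype G := hfin.fintype
  intro t
  -- s := t + i t is fixed
  have hmem : ∀ u : T, u + i u ∈ G := by
    intro u
    show i (u + i u) = u + i u
    rw [map_add, hii, add_comm]
  set N := Fintype.card G with hN
  have hNpos : N ≠ 0 := Fintype.card_ne_zero
  obtain ⟨v, hv⟩ := hdiv t N hNpos
  have hkill : N • ((⟨v + i v, hmem v⟩ : G)) = 0 := card_nsmul_eq_zero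
  have hkill' : N • (v + i v) = 0 := by
    have := congrArg (Subtype.val) hkill
    simpa using this
  have : t + i t = 0 := by
    calc t + i t = N • v + i (N • v) := by rw [hv]
    _ = N • v + N • (i v) := by rw [map_nsmul]
    _ = N • (v + i v) := (nsmul_add _ _ _).symm
    _ = 0 := hkill'
  rw [eq_neg_iff_add_eq_zero, add_comm]; exact this
end

section
/- Let p be an odd prime and M ∈ GL_d(ℤ_p) a matrix with M ≡ I (mod p) and M^p = I. Then M = I. -/
lemma aux_pow_dvd_entry {p d : ℕ} [Fact p.Prime] (A : Matrix (Fin d) (Fin d) ℤ_[p])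
    (k : ℕ) (hA : ∀ i j, (p : ℤ_[p]) ^ k ∣ A i j) :
    ∀ m : ℕ, 1 ≤ m → ∀ i j, (p : ℤ_[p]) ^ (m * k) ∣ (A ^ m) i j := by
  intro m
  induction m with
  | zero => omega
  | succ n ih =>
    intro _ i j
    rcases Nat.eq_zero_or_pos n with h | h
    · subst h; simpa using hA i j
    · rw [pow_succ, Matrix.mul_apply]
      refine Finset.dvd_sum fun t _ => ?_
      have heq : (p : ℤ_[p]) ^ ((n + 1) * k) = (p : ℤ_[p]) ^ (n * k) * (p : ℤ_[p]) ^ k := by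
        rw [← pow_add]; ring_nf
      rw [heq]
      exact mul_dvd_mul (ih h i t) (hA t j)

lemma aux_step {p d : ℕ} [Fact p.Prime] (hodd : p ≠ 2)
    (M : Matrix (Fin d) (Fin d) ℤ_[p]) (hMp : M ^ p = 1) (k : ℕ) (hk : 1 ≤ k)
    (hA : ∀ i j, (p : ℤ_[p]) ^ k ∣ (M - 1) i j) :
    ∀ i j, (p : ℤ_[p]) ^ (k + 1) ∣ (M - 1) i j := by
  have hp : p.Prime := Fact.out
  have hp3 : 3 ≤ p := by
    have := hp.two_le
    omega
  set A : Matrix (Fin d) (Fin d) ℤ_[p] := M - 1 with hAdef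
  have hM : M = A + 1 := by rw [hAdef, sub_add_cancel]
  have hbin : M ^ p = ∑ m ∈ Finset.range (p + 1), p.choose m • A ^ m := by
    rw [hM, Commute.add_pow (Commute.one_right A)]
    refine Finset.sum_congr rfl fun m _ => ?_
    rw [one_pow, mul_one, nsmul_eq_mul, (Nat.cast_commute (p.choose m) (A ^ m)).eq]
  have hsplit : Finset.range (p + 1) = insert 0 (insert 1 (Finset.Ico 2 (p + 1))) := by
    ext x
    simp only [Finset.mem_range, Finset.mem_insert, Finset.mem_Ico]
    omega
  have htot : ∑ m ∈ Finset.range (p + 1), p.choose m • A ^ m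
      = (1 : Matrix (Fin d) (Fin d) ℤ_[p]) := by rw [← hbin, hMp]
  rw [hsplit, Finset.sum_insert (by simp), Finset.sum_insert (by simp)] at htot
  simp only [pow_zero, pow_one, Nat.choose_zero_right, Nat.choose_one_right, one_smul] at htot
  have h0 : p • A + ∑ m ∈ Finset.Ico 2 (p + 1), p.choose m • A ^ m = 0 :=
    add_eq_left.mp htot
  have hPA : p • A = -∑ m ∈ Finset.Ico 2 (p + 1), p.choose m • A ^ m :=
    eq_neg_of_add_eq_zero_left h0
  intro i j
  have hentry : (p : ℤ_[p]) * A i j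
      = -∑ m ∈ Finset.Ico 2 (p + 1), (p.choose m : ℤ_[p]) * (A ^ m) i j := by
    have h := congrArg (fun X : Matrix (Fin d) (Fin d) ℤ_[p] => X i j) hPA
    simp only [Matrix.smul_apply, Matrix.neg_apply, Matrix.sum_apply] at h
    simpa only [nsmul_eq_mul] using h
  have hdvd : (p : ℤ_[p]) ^ (k + 2) ∣ (p : ℤ_[p]) * A i j := by
    rw [hentry]
    rw [dvd_neg]
    refine Finset.dvd_sum fun m hm => ?_
    simp only [Finset.mem_Ico] at hm
    rcases Nat.lt_or_ge m p with hmp | hmp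
    · -- p ∣ choose, p^(2k) ∣ entry
      have hc : (p : ℤ_[p]) ∣ (p.choose m : ℤ_[p]) := by
        exact_mod_cast Nat.cast_dvd_cast (hp.dvd_choose_self (by omega) hmp)
      have he : (p : ℤ_[p]) ^ (k + 1) ∣ (A ^ m) i j := by
        refine dvd_trans (pow_dvd_pow (p : ℤ_[p]) ?_) (aux_pow_dvd_entry A k hA m (by omega) i j)
        nlinarith [hm.1, hk]
      calc (p : ℤ_[p]) ^ (k + 2) = (p : ℤ_[p]) * (p : ℤ_[p]) ^ (k + 1) := by ring
        _ ∣ (p.choose m : ℤ_[p]) * (A ^ m) i j := mul_dvd_mul hc he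
    · -- m ≥ p ≥ 3, so m*k ≥ 3k ≥ k+2
      have he : (p : ℤ_[p]) ^ (k + 2) ∣ (A ^ m) i j := by
        refine dvd_trans (pow_dvd_pow (p : ℤ_[p]) ?_) (aux_pow_dvd_entry A k hA m (by omega) i j)
        nlinarith [hk, hp3, hmp]
      exact Dvd.dvd.mul_left he _
  have hne : (p : ℤ_[p]) ≠ 0 := by
    exact_mod_cast (Nat.cast_ne_zero (R := ℤ_[p])).mpr hp.ne_zero
  have : (p : ℤ_[p]) * (p : ℤ_[p]) ^ (k + 1) ∣ (p : ℤ_[p]) * A i j := by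
    have heq : (p : ℤ_[p]) * (p : ℤ_[p]) ^ (k + 1) = (p : ℤ_[p]) ^ (k + 2) := by ring
    rw [heq]; exact hdvd
  exact (mul_dvd_mul_iff_left hne).mp this

/-- For `p` an odd prime, a matrix over the `p`-adic integers congruent to the
identity mod `p` whose `p`-th power is the identity must be the identity. -/
theorem stmt3 (p : ℕ) [Fact p.Prime] (hodd : p ≠ 2) (d : ℕ)
    (M : Matrix (Fin d) (Fin d) ℤ_[p])
    (hcong : ∀ i j, (p : ℤ_[p]) ∣ (M - 1) i j)
    (hMp : M ^ p = 1) :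
    M = 1 := by
  have key : ∀ k : ℕ, ∀ i j, (p : ℤ_[p]) ^ k ∣ (M - 1) i j := by
    intro k
    induction k with
    | zero => intro i j; simp
    | succ n ih =>
      rcases Nat.eq_zero_or_pos n with h | h
      · subst h; simpa using hcong
      · exact aux_step hodd M hMp n h ih
  have hzero : ∀ i j, (M - 1) i j = 0 := by
    intro i j
    by_contra hx
    have hnorm : ∀ n : ℕ, ‖(M - 1) i j‖ ≤ (p : ℝ) ^ (-n : ℤ) := by
      intro n
      rw [PadicInt.norm_le_pow_iff_mem_span_pow, Ideal.mem_span_singleton]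
      exact key n i j
    have hp : p.Prime := Fact.out
    have hp1 : (1 : ℝ) < (p : ℝ) := by exact_mod_cast hp.one_lt
    have hpos : 0 < ‖(M - 1) i j‖ := norm_pos_iff.mpr hx
    obtain ⟨n, hn⟩ := exists_pow_lt_of_lt_one hpos (inv_lt_one_of_one_lt₀ hp1)
    have := hnorm n
    rw [zpow_neg, zpow_natCast, ← inv_pow] at this
    linarith
  have : M - 1 = 0 := Matrix.ext fun i j => by simpa using hzero i j
  exact sub_eq_zero.mp this
end

section
/- Let T be a divisible abelian p-group of finite Prüfer rank d with an action of an elementary abelian p-group V of rank 2. Then T is generated by the subgroups C_T(v) for v ∈ V∖{1}; i.e., T = ⟨C_T(v) : v ∈ V, v ≠ 1⟩. -/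
/-- A divisible abelian `p`-group of finite Prüfer rank with an action of an
elementary abelian group `V` of order `p²` is generated by the fixed subgroups
`C_T(v)` for `v ∈ V \ {1}`. -/
theorem stmt19 (p : ℕ) (hp : p.Prime) (T : Type*) [AddCommGroup T]
    (hdiv : ∀ (t : T) (n : ℕ), n ≠ 0 → ∃ s : T, n • s = t)
    (hT : ∀ t : T, ∃ k : ℕ, (p ^ k) • t = 0)
    (hrank : {t : T | p • t = 0}.Finite)
    (V : Type*) [CommGroup V] (hcard : Nat.card V = p ^ 2)
    (hexp : ∀ v : V, v ^ p = 1)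
    [DistribMulAction V T] :
    AddSubgroup.closure {t : T | ∃ v : V, v ≠ 1 ∧ v • t = t} = ⊤ := by
  classical
  have hp2 : 2 ≤ p := hp.two_le
  have hfin : Finite V := Nat.finite_of_card_ne_zero (by rw [hcard]; positivity)
  haveI := Fintype.ofFinite V
  haveI : Nontrivial V := by
    rw [← Finite.one_lt_card_iff_nontrivial, hcard]
    nlinarith
  set S := AddSubgroup.closure {t : T | ∃ v : V, v ≠ 1 ∧ v • t = t} with hS
  rw [eq_top_iff]
  intro t _
  have key : ∀ s : T, ((p * (p - 1)) • s) ∈ S := by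
    intro s
    set NV : T := ∑ v : V, v • s with hNVdef
    -- each norm N_v(s) is fixed by v
    have hNv : ∀ v : V, v ≠ 1 → (∑ i ∈ Finset.range p, v ^ i • s) ∈ S := by
      intro v hv
      apply AddSubgroup.subset_closure
      refine ⟨v, hv, ?_⟩
      rw [Finset.smul_sum]
      have h1 : ∀ i, v • (v ^ i • s) = v ^ (i + 1) • s := by
        intro i; rw [smul_smul, ← pow_succ']
      simp_rw [h1]
      have hm : p = (p - 1) + 1 := by omega
      rw [hm, Finset.sum_range_succ, Finset.sum_range_succ', ← hm, hexp v, pow_zero]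
    -- the full norm NV is in S
    have hNV : NV ∈ S := by
      obtain ⟨w, hw⟩ := exists_ne (1 : V)
      apply AddSubgroup.subset_closure
      refine ⟨w, hw, ?_⟩
      rw [hNVdef, Finset.smul_sum]
      simp_rw [smul_smul]
      exact Fintype.sum_equiv (Equiv.mulLeft w) _ _ (fun v => rfl)
    -- inner sums over v ≠ 1 of v^i • s
    have hgi : ∀ i, 0 < i → i < p →
        ∑ v ∈ Finset.univ.erase (1 : V), v ^ i • s = NV - s := by
      intro i hi hip
      have hinj : Function.Injective (fun v : V => v ^ i) := by
        intro a b hab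
        simp only at hab
        have h1 : (a * b⁻¹) ^ i = 1 := by
          rw [mul_pow, inv_pow, hab, mul_inv_cancel]
        have hd1 : orderOf (a * b⁻¹) ∣ i := orderOf_dvd_of_pow_eq_one h1
        have hd2 : orderOf (a * b⁻¹) ∣ p := orderOf_dvd_of_pow_eq_one (hexp _)
        rcases (hp.eq_one_or_self_of_dvd _ hd2) with h | h
        · have := orderOf_eq_one_iff.mp h
          rwa [mul_inv_eq_one] at this
        · exfalso
          have := Nat.le_of_dvd hi (h ▸ hd1)
          omega
      have hbij := Finite.injective_iff_bijective.mp hinj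
      have huniv : ∑ v : V, v ^ i • s = NV :=
        Fintype.sum_equiv (Equiv.ofBijective _ hbij) _ _ (fun v => rfl)
      have h1 : ∑ v ∈ Finset.univ.erase (1 : V), v ^ i • s
          = (∑ v : V, v ^ i • s) - (1 : V) ^ i • s := by
        rw [eq_sub_iff_add_eq, Finset.sum_erase_add _ _ (Finset.mem_univ 1)]
      rw [h1, huniv, one_pow, one_smul]
    have hg0 : ∑ v ∈ Finset.univ.erase (1 : V), v ^ 0 • s = (p ^ 2 - 1) • s := by
      simp only [pow_zero, one_smul, Finset.sum_const]
      congr 1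
      rw [Finset.card_erase_of_mem (Finset.mem_univ 1), Finset.card_univ,
        ← Nat.card_eq_fintype_card, hcard]
    -- the double sum identity
    have hL : ∑ v ∈ Finset.univ.erase (1 : V), ∑ i ∈ Finset.range p, v ^ i • s
        = (p - 1) • (NV - s) + (p ^ 2 - 1) • s := by
      rw [Finset.sum_comm]
      have hm : p = (p - 1) + 1 := by omega
      have hsplit := Finset.sum_range_succ'
        (fun i => ∑ v ∈ Finset.univ.erase (1 : V), v ^ i • s) (p - 1)
      rw [← hm] at hsplit
      rw [hsplit, hg0]
      congr 1
      rw [Finset.sum_congr rfl (fun i hi => hgi (i + 1) (by omega)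
        (by simp only [Finset.mem_range] at hi; omega))]
      rw [Finset.sum_const, Finset.card_range]
    have hn : p * (p - 1) + (p - 1) = p ^ 2 - 1 := by
      have h1 : p ^ 2 = p * p := by ring
      have hq : p ≤ p * p := Nat.le_mul_of_pos_left p (by omega)
      rw [h1, Nat.mul_sub, Nat.mul_one]
      omega
    have hEq : (p * (p - 1)) • s
        = (∑ v ∈ Finset.univ.erase (1 : V), ∑ i ∈ Finset.range p, v ^ i • s)
          - (p - 1) • NV := by
      rw [hL, ← hn, add_nsmul, smul_sub]
      abel
    rw [hEq]
    exact S.sub_mem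
      (S.sum_mem (fun v hv => hNv v (Finset.ne_of_mem_erase hv)))
      (S.nsmul_mem hNV _)
  obtain ⟨s, hs⟩ := hdiv t (p * (p - 1)) (Nat.mul_ne_zero (by omega) (by omega))
  exact hs ▸ key s
end
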